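/- (Theorem 2 of the paper.) Consider the measurement update e_k = δx_k − K(H δx_k + B_ρ ρ_k + B_v v_k), where ρ_k satisfies the quadratic constraint [δx_k; ρ_k]ᵀ M [δx_k; ρ_k] ≥ 0 almost surely, v_k has second-moment matrix R and is uncorrelated with δx_k and ρ_k. If there exist symmetric Z, Y ∈ S^n and ξ ≥ 0 with [[−Y, HᵀKᵀZKB_ρ − ZKB_ρ],[*, B_ρᵀKᵀZKB_ρ]] + ξ M ⪯ 0, then tr(P⁺ Z) ≤ tr(P⁻ (I − KH)ᵀ Z (I − KH)) + tr(K B_v R B_vᵀ Kᵀ Z) + tr(P⁻ Y), where P⁺ = 𝔼[e_k e_kᵀ] and P⁻ = 𝔼[δx_k δx_kᵀ]. -/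

import Mathlib

open Matrix MeasureTheory

def Matrix.NegSemidef' {k : Type*} [Fintype k] (N : Matrix k k ℝ) : Prop :=
  (-N).PosSemidef

/-- Uncentered second-moment (cross-moment) matrix `𝔼[x yᵀ]`. -/
noncomputable def secondMoment {Ω : Type*} [MeasureSpace Ω] {n m : ℕ}
    (x : Ω → Fin n → ℝ) (y : Ω → Fin m → ℝ) : Matrix (Fin n) (Fin m) ℝ :=
  Matrix.of fun i j => ∫ ω, x ω i * y ω j

/-!
Write `e = A δx - B ρ - W v` with `A = I - KH`, `B = K B_ρ`, `W = K B_v`. Since `v` is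
uncorrelated with `(δx, ρ)`, the cross terms of `𝔼[eᵀ Z e]` vanish, leaving
`𝔼[(A δx - B ρ)ᵀ Z (A δx - B ρ)] + tr(W R Wᵀ Z)`. Pointwise, the quadratic form of the LMI
matrix at `w = (δx, ρ)` equals `(A δx - B ρ)ᵀ Z (A δx - B ρ) - δxᵀ (Aᵀ Z A + Y) δx`, and it is
`≤ -ξ wᵀ M w ≤ 0` by the LMI and the quadratic constraint (an S-procedure step). Taking
expectations gives the bound.
-/

section QuadraticForms

variable {ι κ ν : Type*} [Fintype ι] [Fintype κ] [Fintype ν]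

theorem dotProduct_mulVec_eq_sum (x : ι → ℝ) (C : Matrix ι κ ℝ) (y : κ → ℝ) :
    x ⬝ᵥ (C *ᵥ y) = ∑ i, ∑ j, C i j * (x i * y j) := by
  simp only [dotProduct, mulVec, Finset.mul_sum]
  exact Finset.sum_congr rfl fun i _ => Finset.sum_congr rfl fun j _ => by ring

theorem mulVec_mul_mulVec_eq_dotProduct_vecMulVec {ι' κ' : Type*} (P : Matrix ι' ι ℝ)
    (Q : Matrix κ' κ ℝ) (x : ι → ℝ) (y : κ → ℝ) (i : ι') (j : κ') :
    (P *ᵥ x) i * (Q *ᵥ y) j = x ⬝ᵥ (vecMulVec (P i) (Q j) *ᵥ y) := by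
  simp only [mulVec, dotProduct, vecMulVec_apply]
  rw [Finset.sum_mul_sum]
  simp only [Finset.mul_sum]
  exact Finset.sum_congr rfl fun k _ => Finset.sum_congr rfl fun l _ => by ring

theorem mulVec_dotProduct_mulVec_mulVec (P : Matrix ν ι ℝ) (C : Matrix ν ν ℝ)
    (Q : Matrix ν κ ℝ) (x : ι → ℝ) (y : κ → ℝ) :
    (P *ᵥ x) ⬝ᵥ (C *ᵥ (Q *ᵥ y)) = x ⬝ᵥ ((Pᵀ * C * Q) *ᵥ y) := by
  rw [mulVec_mulVec, ← vecMul_transpose, ← dotProduct_mulVec, mulVec_mulVec, ← Matrix.mul_assoc]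

theorem Matrix.IsSymm.dotProduct_mulVec_comm {Z : Matrix ν ν ℝ} (hZ : Z.IsSymm) (u w : ν → ℝ) :
    u ⬝ᵥ (Z *ᵥ w) = w ⬝ᵥ (Z *ᵥ u) := by
  rw [dotProduct_mulVec, dotProduct_comm, ← mulVec_transpose, hZ.eq]

theorem dotProduct_mulVec_nonpos_of_negSemidef_add_smul {N M : Matrix ι ι ℝ} {ξ : ℝ}
    (hNM : (N + ξ • M).NegSemidef') (hξ : 0 ≤ ξ) {w : ι → ℝ} (hw : 0 ≤ w ⬝ᵥ (M *ᵥ w)) :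
    w ⬝ᵥ (N *ᵥ w) ≤ 0 := by
  have h := hNM.dotProduct_mulVec_nonneg w
  simp only [star_trivial, neg_mulVec, dotProduct_neg, add_mulVec, smul_mulVec, dotProduct_add,
    dotProduct_smul, smul_eq_mul] at h
  nlinarith [mul_nonneg hξ hw]

theorem mulVec_sub_dotProduct_le_of_negSemidef {Z : Matrix ν ν ℝ} (hZ : Z.IsSymm)
    (A : Matrix ν ι ℝ) (B : Matrix ν κ ℝ) (Y : Matrix ι ι ℝ) {M : Matrix (ι ⊕ κ) (ι ⊕ κ) ℝ}
    {ξ : ℝ} (hξ : 0 ≤ ξ)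
    (hLMI : (fromBlocks (-Y) (-(Aᵀ * Z * B)) (-(Aᵀ * Z * B))ᵀ (Bᵀ * Z * B) + ξ • M).NegSemidef')
    {x : ι → ℝ} {r : κ → ℝ} (hQC : 0 ≤ Sum.elim x r ⬝ᵥ (M *ᵥ Sum.elim x r)) :
    (A *ᵥ x - B *ᵥ r) ⬝ᵥ (Z *ᵥ (A *ᵥ x - B *ᵥ r)) ≤
      (A *ᵥ x) ⬝ᵥ (Z *ᵥ (A *ᵥ x)) + x ⬝ᵥ (Y *ᵥ x) := by
  have h := dotProduct_mulVec_nonpos_of_negSemidef_add_smul hLMI hξ hQC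
  have hcross : r ⬝ᵥ ((Aᵀ * Z * B)ᵀ *ᵥ x) = x ⬝ᵥ ((Aᵀ * Z * B) *ᵥ r) := by
    rw [mulVec_transpose, dotProduct_comm, dotProduct_mulVec]
  simp only [fromBlocks_mulVec, sumElim_dotProduct_sumElim, Sum.elim_comp_inl, Sum.elim_comp_inr,
    transpose_neg, neg_mulVec, dotProduct_add, dotProduct_neg, hcross] at h
  simp only [mulVec_sub, dotProduct_sub, sub_dotProduct, hZ.dotProduct_mulVec_comm (B *ᵥ r),
    mulVec_dotProduct_mulVec_mulVec]
  linarith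

theorem sub_mulVec_add_add_eq_fromCols_mulVec_sub {σ τ : Type*} [Fintype σ] [Fintype τ]
    [DecidableEq ι] (H : Matrix σ ι ℝ) (K : Matrix ι σ ℝ) (Bρ : Matrix σ κ ℝ) (Bv : Matrix σ τ ℝ)
    (x : ι → ℝ) (r : κ → ℝ) (y : τ → ℝ) :
    x - K *ᵥ (H *ᵥ x + Bρ *ᵥ r + Bv *ᵥ y) =
      fromCols (1 - K * H) (-(K * Bρ)) *ᵥ Sum.elim x r - (K * Bv) *ᵥ y := by
  rw [fromCols_mulVec_sumElim]
  simp only [mulVec_add, mulVec_mulVec, sub_mulVec, one_mulVec, neg_mulVec]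
  abel

theorem trace_mul_transpose_mul_mul (S : Matrix κ κ ℝ) (W : Matrix ν κ ℝ) (Z : Matrix ν ν ℝ) :
    (S * (Wᵀ * Z * W)).trace = (W * S * Wᵀ * Z).trace := by
  simp only [Matrix.mul_assoc]
  rw [trace_mul_comm W]
  simp only [Matrix.mul_assoc]

end QuadraticForms

section IntegrableMul

variable {Ω ι κ : Type*} [MeasurableSpace Ω] {μ : Measure Ω}
  {x x' : Ω → ι → ℝ} {y y' : Ω → κ → ℝ}

def IntegrableMul (x : Ω → ι → ℝ) (y : Ω → κ → ℝ) (μ : Measure Ω := by volume_tac) : Prop :=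
  ∀ i j, Integrable (fun ω => x ω i * y ω j) μ

namespace IntegrableMul

theorem swap (h : IntegrableMul x y μ) : IntegrableMul y x μ := fun i j => by
  simpa only [mul_comm] using h j i

theorem sub_left (h : IntegrableMul x y μ) (h' : IntegrableMul x' y μ) :
    IntegrableMul (x - x') y μ := fun i j => by
  simpa only [Pi.sub_def, sub_mul] using (h i j).sub (h' i j)

theorem sub_right (h : IntegrableMul x y μ) (h' : IntegrableMul x y' μ) :
    IntegrableMul x (y - y') μ :=
  (h.swap.sub_left h'.swap).swap

theorem sumElim_left {ι' : Type*} {x' : Ω → ι' → ℝ} (h : IntegrableMul x y μ)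
    (h' : IntegrableMul x' y μ) : IntegrableMul (fun ω => Sum.elim (x ω) (x' ω)) y μ := by
  rintro (i | i) j
  exacts [h i j, h' i j]

theorem sumElim_right {κ' : Type*} {y' : Ω → κ' → ℝ} (h : IntegrableMul x y μ)
    (h' : IntegrableMul x y' μ) : IntegrableMul x (fun ω => Sum.elim (y ω) (y' ω)) μ :=
  (h.swap.sumElim_left h'.swap).swap

end IntegrableMul

variable [Fintype ι] [Fintype κ]

namespace IntegrableMul

theorem integrable_dotProduct_mulVec (h : IntegrableMul x y μ) (C : Matrix ι κ ℝ) :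
    Integrable (fun ω => x ω ⬝ᵥ (C *ᵥ y ω)) μ := by
  simp only [dotProduct_mulVec_eq_sum]
  exact integrable_finsetSum _ fun i _ => integrable_finsetSum _ fun j _ => (h i j).const_mul _

theorem mulVec {ι' κ' : Type*} (h : IntegrableMul x y μ) (P : Matrix ι' ι ℝ) (Q : Matrix κ' κ ℝ) :
    IntegrableMul (fun ω => P *ᵥ x ω) (fun ω => Q *ᵥ y ω) μ := fun i j => by
  simpa only [mulVec_mul_mulVec_eq_dotProduct_vecMulVec] using h.integrable_dotProduct_mulVec _

theorem mulVec_sub_mulVec {ν : Type*} (hxx : IntegrableMul x x μ) (hyx : IntegrableMul y x μ)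
    (hyy : IntegrableMul y y μ) (L : Matrix ν ι ℝ) (W : Matrix ν κ ℝ) :
    IntegrableMul (fun ω => L *ᵥ x ω - W *ᵥ y ω) (fun ω => L *ᵥ x ω - W *ᵥ y ω) μ :=
  ((hxx.mulVec L L).sub_left (hyx.mulVec W L)).sub_right
    ((hyx.swap.mulVec L W).sub_left (hyy.mulVec W W))

theorem integral_dotProduct_mulVec (h : IntegrableMul x y μ) (C : Matrix ι κ ℝ) :
    ∫ ω, x ω ⬝ᵥ (C *ᵥ y ω) ∂μ = ∑ i, ∑ j, C i j * ∫ ω, x ω i * y ω j ∂μ := by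
  simp only [dotProduct_mulVec_eq_sum]
  rw [integral_finsetSum _ fun i _ => integrable_finsetSum _ fun j _ => (h i j).const_mul (C i j)]
  refine Finset.sum_congr rfl fun i _ => ?_
  rw [integral_finsetSum _ fun j _ => (h i j).const_mul (C i j)]
  simp only [integral_const_mul]

end IntegrableMul

variable {ν : Type*} [Fintype ν] {Z : Matrix ν ν ℝ}

theorem integral_mulVec_sub_mulVec_dotProduct_of_uncorrelated (hZ : Z.IsSymm)
    (L : Matrix ν ι ℝ) (W : Matrix ν κ ℝ)
    (hxx : IntegrableMul x x μ) (hyx : IntegrableMul y x μ) (hyy : IntegrableMul y y μ)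
    (huncorr : ∀ j i, ∫ ω, y ω j * x ω i ∂μ = 0) :
    ∫ ω, (L *ᵥ x ω - W *ᵥ y ω) ⬝ᵥ (Z *ᵥ (L *ᵥ x ω - W *ᵥ y ω)) ∂μ =
      (∫ ω, (L *ᵥ x ω) ⬝ᵥ (Z *ᵥ (L *ᵥ x ω)) ∂μ) + ∫ ω, (W *ᵥ y ω) ⬝ᵥ (Z *ᵥ (W *ᵥ y ω)) ∂μ := by
  have hsplit : ∀ ω, (L *ᵥ x ω - W *ᵥ y ω) ⬝ᵥ (Z *ᵥ (L *ᵥ x ω - W *ᵥ y ω)) =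
      (L *ᵥ x ω) ⬝ᵥ (Z *ᵥ (L *ᵥ x ω)) + (W *ᵥ y ω) ⬝ᵥ (Z *ᵥ (W *ᵥ y ω)) -
        2 * y ω ⬝ᵥ ((Wᵀ * Z * L) *ᵥ x ω) := fun ω => by
    rw [← mulVec_dotProduct_mulVec_mulVec]
    simp only [mulVec_sub, dotProduct_sub, sub_dotProduct, hZ.dotProduct_mulVec_comm (L *ᵥ x ω)]
    ring
  have hcross : ∫ ω, y ω ⬝ᵥ ((Wᵀ * Z * L) *ᵥ x ω) ∂μ = 0 := by
    simp [hyx.integral_dotProduct_mulVec, huncorr]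
  have hLx := (hxx.mulVec L L).integrable_dotProduct_mulVec Z
  have hWy := (hyy.mulVec W W).integrable_dotProduct_mulVec Z
  simp only [hsplit]
  rw [integral_sub _ ((hyx.integrable_dotProduct_mulVec _).const_mul 2), integral_const_mul,
    hcross, integral_add hLx hWy]
  · ring
  · exact hLx.add hWy

theorem integral_fromCols_mulVec_dotProduct_le_of_negSemidef {r : Ω → κ → ℝ} (hZ : Z.IsSymm)
    (hxx : IntegrableMul x x μ)
    (hw : IntegrableMul (fun ω => Sum.elim (x ω) (r ω)) (fun ω => Sum.elim (x ω) (r ω)) μ)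
    (A : Matrix ν ι ℝ) (B : Matrix ν κ ℝ) (Y : Matrix ι ι ℝ) {M : Matrix (ι ⊕ κ) (ι ⊕ κ) ℝ}
    {ξ : ℝ} (hξ : 0 ≤ ξ)
    (hLMI : (fromBlocks (-Y) (-(Aᵀ * Z * B)) (-(Aᵀ * Z * B))ᵀ (Bᵀ * Z * B) + ξ • M).NegSemidef')
    (hQC : ∀ᵐ ω ∂μ, 0 ≤ Sum.elim (x ω) (r ω) ⬝ᵥ (M *ᵥ Sum.elim (x ω) (r ω))) :
    ∫ ω, (fromCols A (-B) *ᵥ Sum.elim (x ω) (r ω)) ⬝ᵥ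
        (Z *ᵥ (fromCols A (-B) *ᵥ Sum.elim (x ω) (r ω))) ∂μ ≤
      (∫ ω, (A *ᵥ x ω) ⬝ᵥ (Z *ᵥ (A *ᵥ x ω)) ∂μ) + ∫ ω, x ω ⬝ᵥ (Y *ᵥ x ω) ∂μ := by
  have hAx := (hxx.mulVec A A).integrable_dotProduct_mulVec Z
  rw [← integral_add hAx (hxx.integrable_dotProduct_mulVec Y)]
  refine integral_mono_ae ((hw.mulVec _ _).integrable_dotProduct_mulVec Z)
    (hAx.add (hxx.integrable_dotProduct_mulVec Y)) ?_
  filter_upwards [hQC] with ω hω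
  simpa only [fromCols_mulVec_sumElim, neg_mulVec, ← sub_eq_add_neg] using
    mulVec_sub_dotProduct_le_of_negSemidef hZ A B Y hξ hLMI hω

theorem integral_fromCols_mulVec_sub_mulVec_dotProduct_le {r : Ω → κ → ℝ} {τ : Type*}
    [Fintype τ] {v : Ω → τ → ℝ} (hZ : Z.IsSymm) (hxx : IntegrableMul x x μ)
    (hw : IntegrableMul (fun ω => Sum.elim (x ω) (r ω)) (fun ω => Sum.elim (x ω) (r ω)) μ)
    (hvw : IntegrableMul v (fun ω => Sum.elim (x ω) (r ω)) μ) (hvv : IntegrableMul v v μ)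
    (huncorr : ∀ j k, ∫ ω, v ω j * Sum.elim (x ω) (r ω) k ∂μ = 0)
    (A : Matrix ν ι ℝ) (B : Matrix ν κ ℝ) (W : Matrix ν τ ℝ) (Y : Matrix ι ι ℝ)
    {M : Matrix (ι ⊕ κ) (ι ⊕ κ) ℝ} {ξ : ℝ} (hξ : 0 ≤ ξ)
    (hLMI : (fromBlocks (-Y) (-(Aᵀ * Z * B)) (-(Aᵀ * Z * B))ᵀ (Bᵀ * Z * B) + ξ • M).NegSemidef')
    (hQC : ∀ᵐ ω ∂μ, 0 ≤ Sum.elim (x ω) (r ω) ⬝ᵥ (M *ᵥ Sum.elim (x ω) (r ω))) :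
    ∫ ω, (fromCols A (-B) *ᵥ Sum.elim (x ω) (r ω) - W *ᵥ v ω) ⬝ᵥ
        (Z *ᵥ (fromCols A (-B) *ᵥ Sum.elim (x ω) (r ω) - W *ᵥ v ω)) ∂μ ≤
      (∫ ω, (A *ᵥ x ω) ⬝ᵥ (Z *ᵥ (A *ᵥ x ω)) ∂μ) + (∫ ω, x ω ⬝ᵥ (Y *ᵥ x ω) ∂μ) +
        ∫ ω, (W *ᵥ v ω) ⬝ᵥ (Z *ᵥ (W *ᵥ v ω)) ∂μ := by
  rw [integral_mulVec_sub_mulVec_dotProduct_of_uncorrelated hZ _ W hw hvw hvv huncorr]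
  gcongr
  exact integral_fromCols_mulVec_dotProduct_le_of_negSemidef hZ hxx hw A B Y hξ hLMI hQC

end IntegrableMul

section SecondMoment

variable {Ω : Type*} [MeasureSpace Ω] {a b c : ℕ}

theorem secondMoment_eq_zero_iff {x : Ω → Fin a → ℝ} {y : Ω → Fin b → ℝ} :
    secondMoment x y = 0 ↔ ∀ i j, ∫ ω, x ω i * y ω j = 0 := by
  simp [← Matrix.ext_iff, secondMoment]

theorem IntegrableMul.integral_dotProduct_mulVec_eq_trace {x : Ω → Fin a → ℝ}
    {y : Ω → Fin b → ℝ} (h : IntegrableMul x y) (C : Matrix (Fin a) (Fin b) ℝ) :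
    ∫ ω, x ω ⬝ᵥ (C *ᵥ y ω) = (secondMoment x y * Cᵀ).trace := by
  rw [h.integral_dotProduct_mulVec]
  simp only [trace, diag, mul_apply, secondMoment, of_apply, transpose_apply]
  exact Finset.sum_congr rfl fun i _ => Finset.sum_congr rfl fun j _ => mul_comm _ _

theorem IntegrableMul.integral_mulVec_dotProduct_mulVec_eq_trace {y : Ω → Fin b → ℝ}
    (h : IntegrableMul y y) (W : Matrix (Fin c) (Fin b) ℝ) {Z : Matrix (Fin c) (Fin c) ℝ}
    (hZ : Z.IsSymm) :
    ∫ ω, (W *ᵥ y ω) ⬝ᵥ (Z *ᵥ (W *ᵥ y ω)) = (secondMoment y y * (Wᵀ * Z * W)).trace := by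
  simp only [mulVec_dotProduct_mulVec_mulVec, h.integral_dotProduct_mulVec_eq_trace,
    transpose_mul, transpose_transpose, hZ.eq, Matrix.mul_assoc]

end SecondMoment

theorem stmt_8_general {Ω : Type*} [MeasureSpace Ω]
    (n m p q : ℕ)
    (δx : Ω → Fin n → ℝ) (ρ : Ω → Fin m → ℝ) (v : Ω → Fin p → ℝ)
    (hxx : ∀ i j, Integrable fun ω => δx ω i * δx ω j)
    (hρρ : ∀ i j, Integrable fun ω => ρ ω i * ρ ω j)
    (hvv : ∀ i j, Integrable fun ω => v ω i * v ω j)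
    (hxρ : ∀ i j, Integrable fun ω => δx ω i * ρ ω j)
    (hxv : ∀ i j, Integrable fun ω => δx ω i * v ω j)
    (hρv : ∀ i j, Integrable fun ω => ρ ω i * v ω j)
    (huncorr_vx : secondMoment v δx = 0)
    (huncorr_vρ : secondMoment v ρ = 0)
    (R : Matrix (Fin p) (Fin p) ℝ) (hR : secondMoment v v = R)
    (H : Matrix (Fin q) (Fin n) ℝ) (K : Matrix (Fin n) (Fin q) ℝ)
    (Bρ : Matrix (Fin q) (Fin m) ℝ) (Bv : Matrix (Fin q) (Fin p) ℝ)
    (M : Matrix (Fin n ⊕ Fin m) (Fin n ⊕ Fin m) ℝ)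
    (hQC : ∀ᵐ ω ∂(volume : Measure Ω),
      0 ≤ Sum.elim (δx ω) (ρ ω) ⬝ᵥ (M *ᵥ Sum.elim (δx ω) (ρ ω)))
    (e : Ω → Fin n → ℝ)
    (he : ∀ ω, e ω = δx ω - K *ᵥ (H *ᵥ δx ω + Bρ *ᵥ ρ ω + Bv *ᵥ v ω))
    (Z Y : Matrix (Fin n) (Fin n) ℝ) (hZsym : Z.IsSymm) (hYsym : Y.IsSymm)
    (ξ : ℝ) (hξ : 0 ≤ ξ)
    (hLMI : (Matrix.fromBlocks (-Y) (Hᵀ * Kᵀ * Z * K * Bρ - Z * K * Bρ)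
        (Hᵀ * Kᵀ * Z * K * Bρ - Z * K * Bρ)ᵀ (Bρᵀ * Kᵀ * Z * K * Bρ)
        + ξ • M).NegSemidef') :
    (secondMoment e e * Z).trace ≤
      (secondMoment δx δx * ((1 - K * H)ᵀ * Z * (1 - K * H))).trace +
        (K * Bv * R * Bvᵀ * Kᵀ * Z).trace + (secondMoment δx δx * Y).trace := by
  set A := 1 - K * H
  set B := K * Bρ
  set W := K * Bv
  set z : Ω → Fin n ⊕ Fin m → ℝ := fun ω => Sum.elim (δx ω) (ρ ω)
  have hzz : IntegrableMul z z :=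
    (IntegrableMul.sumElim_right hxx hxρ).sumElim_left
      ((IntegrableMul.swap hxρ).sumElim_right hρρ)
  have hvz : IntegrableMul v z :=
    (IntegrableMul.swap hxv).sumElim_right (IntegrableMul.swap hρv)
  have hvz_uncorr : ∀ j k, ∫ ω, v ω j * z ω k = 0 := by
    rintro j (k | k)
    exacts [secondMoment_eq_zero_iff.1 huncorr_vx j k, secondMoment_eq_zero_iff.1 huncorr_vρ j k]
  have he_stacked : e = fun ω => fromCols A (-B) *ᵥ z ω - W *ᵥ v ω :=
    funext fun ω => (he ω).trans (sub_mulVec_add_add_eq_fromCols_mulVec_sub H K Bρ Bv _ _ _)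
  have hee : IntegrableMul e e := he_stacked ▸ hzz.mulVec_sub_mulVec hvz hvv _ _
  have hLMI_AB :
      (fromBlocks (-Y) (-(Aᵀ * Z * B)) (-(Aᵀ * Z * B))ᵀ (Bᵀ * Z * B) + ξ • M).NegSemidef' := by
    convert hLMI using 3 <;> simp only [A, B, transpose_sub, transpose_one, transpose_mul,
      Matrix.sub_mul, Matrix.one_mul, Matrix.mul_assoc, neg_sub]
  calc (secondMoment e e * Z).trace = ∫ ω, e ω ⬝ᵥ (Z *ᵥ e ω) := by
        rw [hee.integral_dotProduct_mulVec_eq_trace, hZsym.eq]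
    _ ≤ (∫ ω, (A *ᵥ δx ω) ⬝ᵥ (Z *ᵥ (A *ᵥ δx ω))) + (∫ ω, δx ω ⬝ᵥ (Y *ᵥ δx ω)) +
          ∫ ω, (W *ᵥ v ω) ⬝ᵥ (Z *ᵥ (W *ᵥ v ω)) := by
        rw [he_stacked]
        exact integral_fromCols_mulVec_sub_mulVec_dotProduct_le hZsym hxx hzz hvz hvv hvz_uncorr
          A B W Y hξ hLMI_AB hQC
    _ = _ := by
        rw [IntegrableMul.integral_mulVec_dotProduct_mulVec_eq_trace hxx A hZsym,
          IntegrableMul.integral_dotProduct_mulVec_eq_trace hxx, hYsym.eq,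
          IntegrableMul.integral_mulVec_dotProduct_mulVec_eq_trace hvv W hZsym, hR,
          trace_mul_transpose_mul_mul R W]
        simp only [W, transpose_mul, Matrix.mul_assoc]
        ring

/-- Theorem 2 of the paper: measurement-update covariance bound
`tr(P⁺ Z) ≤ tr(P⁻ (I − KH)ᵀ Z (I − KH)) + tr(K B_v R B_vᵀ Kᵀ Z) + tr(P⁻ Y)`. -/
theorem stmt_8 {Ω : Type*} [MeasureSpace Ω] [IsProbabilityMeasure (volume : Measure Ω)]
    (n m p q : ℕ)
    (δx : Ω → Fin n → ℝ) (ρ : Ω → Fin m → ℝ) (v : Ω → Fin p → ℝ)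
    (hxx : ∀ i j, Integrable fun ω => δx ω i * δx ω j)
    (hρρ : ∀ i j, Integrable fun ω => ρ ω i * ρ ω j)
    (hvv : ∀ i j, Integrable fun ω => v ω i * v ω j)
    (hxρ : ∀ i j, Integrable fun ω => δx ω i * ρ ω j)
    (hxv : ∀ i j, Integrable fun ω => δx ω i * v ω j)
    (hρv : ∀ i j, Integrable fun ω => ρ ω i * v ω j)
    (huncorr_vx : secondMoment v δx = 0)
    (huncorr_vρ : secondMoment v ρ = 0)
    (R : Matrix (Fin p) (Fin p) ℝ) (hR : secondMoment v v = R)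
    (H : Matrix (Fin q) (Fin n) ℝ) (K : Matrix (Fin n) (Fin q) ℝ)
    (Bρ : Matrix (Fin q) (Fin m) ℝ) (Bv : Matrix (Fin q) (Fin p) ℝ)
    (M : Matrix (Fin n ⊕ Fin m) (Fin n ⊕ Fin m) ℝ) (hM : M.IsSymm)
    (hQC : ∀ᵐ ω ∂(volume : Measure Ω),
      0 ≤ Sum.elim (δx ω) (ρ ω) ⬝ᵥ (M *ᵥ Sum.elim (δx ω) (ρ ω)))
    (e : Ω → Fin n → ℝ)
    (he : ∀ ω, e ω = δx ω - K *ᵥ (H *ᵥ δx ω + Bρ *ᵥ ρ ω + Bv *ᵥ v ω))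
    (Z Y : Matrix (Fin n) (Fin n) ℝ) (hZsym : Z.IsSymm) (hYsym : Y.IsSymm)
    (ξ : ℝ) (hξ : 0 ≤ ξ)
    (hLMI : (Matrix.fromBlocks (-Y) (Hᵀ * Kᵀ * Z * K * Bρ - Z * K * Bρ)
        (Hᵀ * Kᵀ * Z * K * Bρ - Z * K * Bρ)ᵀ (Bρᵀ * Kᵀ * Z * K * Bρ)
        + ξ • M).NegSemidef') :
    (secondMoment e e * Z).trace ≤
      (secondMoment δx δx * ((1 - K * H)ᵀ * Z * (1 - K * H))).trace +
        (K * Bv * R * Bvᵀ * Kᵀ * Z).trace + (secondMoment δx δx * Y).trace :=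
  stmt_8_general n m p q δx ρ v hxx hρρ hvv hxρ hxv hρv huncorr_vx huncorr_vρ R hR H K Bρ Bv M hQC e
    he Z Y hZsym hYsym ξ hξ hLMI
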